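/- arXiv:2202.05693 — 2 statements merged into one kernel-verified Lean document; each statement's English description precedes it below -/
import Mathlib

section
/- Schützenberger's truncation lemma: let S be a recognizable series over a field F with linear representation (c, M, b) of size s, i.e., S = ∑_{k≥0} c · M^k · b where M is an s×s matrix of homogeneous linear forms in noncommuting variables, c ∈ F^{1×s}, b ∈ F^{s×1}. Then S is the zero series if and only if c · M^k · b = 0 for all k ≤ s − 1. -/
/-!
Write `M = ∑ₜ xₜ • Aₜ` with scalar matrices `Aₜ`. Then `v Mᵏ⁺¹ b = ∑ₜ xₜ · (v Aₜ) Mᵏ b`, and in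
the free algebra such a sum vanishes only if every `(v Aₜ) Mᵏ b` does. Hence the spaces
`V k = vanishingUpTo M b k` of row vectors `v` with `v Mʲ b = 0` for all `j < k` satisfy
`V (k + 1) = ker (· ⬝ᵥ b) ⊓ ⨅ₜ Aₜ⁻¹ (V k)`: they are the iterates, starting from the whole space,
of a single monotone map on subspaces of `Fˢ`. Such a decreasing chain must stall within `s` steps
and is constant from then on, so `V s ≤ V k` for every `k`.
-/

open Matrix Module

theorem FreeMonoid.of_mul_eq_of_mul_iff {X : Type*} {t u : X} {d w : FreeMonoid X} :
    of t * d = of u * w ↔ t = u ∧ d = w := by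
  rw [← toList.injective.eq_iff, toList_of_mul, toList_of_mul, List.cons_eq_cons,
    toList.injective.eq_iff]

namespace FreeAlgebra

variable {R X : Type*} [CommSemiring R]

theorem equivMonoidAlgebraFreeMonoid_ι (t : X) :
    equivMonoidAlgebraFreeMonoid (ι R t) = MonoidAlgebra.single (FreeMonoid.of t) 1 := by
  simp [equivMonoidAlgebraFreeMonoid]

theorem coeff_equivMonoidAlgebraFreeMonoid_ι_mul [DecidableEq X] (t u : X) (p : FreeAlgebra R X)
    (w : FreeMonoid X) :
    (equivMonoidAlgebraFreeMonoid (ι R t * p)).coeff (FreeMonoid.of u * w) =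
      if t = u then (equivMonoidAlgebraFreeMonoid p).coeff w else 0 := by
  rw [map_mul equivMonoidAlgebraFreeMonoid, equivMonoidAlgebraFreeMonoid_ι]
  split_ifs with h
  · subst h
    rw [MonoidAlgebra.coeff_single_mul_eq_mul_coeff w (by simp), one_mul]
  · exact MonoidAlgebra.coeff_single_mul_of_forall_mul_ne _ _ fun d hd =>
      h (FreeMonoid.of_mul_eq_of_mul_iff.1 hd).1

theorem sum_ι_mul_eq_zero_iff [Fintype X] (p : X → FreeAlgebra R X) :
    ∑ t, ι R t * p t = 0 ↔ ∀ t, p t = 0 := by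
  classical
  refine ⟨fun h u => equivMonoidAlgebraFreeMonoid.injective ?_, fun h => by simp [h]⟩
  ext w
  simpa only [map_sum, MonoidAlgebra.coeff_sum, Finsupp.finsetSum_apply,
    coeff_equivMonoidAlgebraFreeMonoid_ι_mul, Finset.sum_ite_eq', Finset.mem_univ, if_true,
    map_zero, MonoidAlgebra.coeff_zero, Finsupp.coe_zero, Pi.zero_apply] using
    congrArg (fun q => (equivMonoidAlgebraFreeMonoid q).coeff (FreeMonoid.of u * w)) h

end FreeAlgebra

theorem Nat.exists_le_succ_eq_of_antitone {g : ℕ → ℕ} (hg : Antitone g) :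
    ∃ j ≤ g 0, g (j + 1) = g j := by
  by_contra! h
  have hdrop : ∀ k ≤ g 0 + 1, g k + k ≤ g 0 := by
    intro k hk
    induction k with
    | zero => simp
    | succ k ih =>
      have := lt_of_le_of_ne (hg (Nat.le_add_right k 1)) (h k (by omega))
      have := ih (by omega)
      omega
  have := hdrop (g 0 + 1) le_rfl
  omega

theorem Submodule.iterate_finrank_top_le {K V : Type*} [DivisionRing K] [AddCommGroup V]
    [Module K V] [FiniteDimensional K V] {f : Submodule K V → Submodule K V} (hf : Monotone f)
    (m : ℕ) : f^[finrank K V] ⊤ ≤ f^[m] ⊤ := by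
  set N : ℕ → Submodule K V := fun k => f^[k] ⊤
  have hanti : Antitone N := hf.antitone_iterate_of_map_le le_top
  obtain ⟨j, hj, hfix⟩ : ∃ j ≤ finrank K V, N (j + 1) = N j := by
    obtain ⟨j, hj, hrank⟩ :=
      Nat.exists_le_succ_eq_of_antitone (g := fun k => finrank K (N k)) fun _ _ h =>
        Submodule.finrank_mono (hanti h)
    refine ⟨j, by rwa [show N 0 = ⊤ from rfl, finrank_top] at hj,
      Submodule.eq_of_le_of_finrank_eq (hanti j.le_succ) hrank⟩
  have hstable : ∀ k ≥ j, N k = N j := by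
    intro k hk
    obtain ⟨d, rfl⟩ := Nat.exists_eq_add_of_le hk
    show f^[j + d] ⊤ = f^[j] ⊤
    rw [add_comm, Function.iterate_add_apply]
    exact Function.iterate_fixed (by rwa [← Function.iterate_succ_apply' f j]) d
  calc N (finrank K V) = N (max m (finrank K V)) := by
        rw [hstable _ hj, hstable _ (le_max_of_le_right hj)]
    _ ≤ N m := hanti (le_max_left _ _)

section SeriesTerm

variable {F R ι : Type*} [CommSemiring F] [Semiring R] [Algebra F R] [Fintype ι] [DecidableEq ι]

def seriesTerm (M : Matrix ι ι R) (b : ι → F) (k : ℕ) : (ι → F) →ₗ[F] R where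
  toFun v := ∑ i, ∑ j, (v i * b j) • (M ^ k) i j
  map_add' v w := by simp only [Pi.add_apply, add_mul, add_smul, Finset.sum_add_distrib]
  map_smul' a v := by
    simp only [Pi.smul_apply, smul_eq_mul, mul_assoc, mul_smul, Finset.smul_sum, RingHom.id_apply]

theorem seriesTerm_apply (M : Matrix ι ι R) (b : ι → F) (k : ℕ) (v : ι → F) :
    seriesTerm M b k v = ∑ i, ∑ j, (v i * b j) • (M ^ k) i j := rfl

theorem seriesTerm_succ {T : Type*} [Fintype T] {M : Matrix ι ι R} {x : T → R}
    {A : T → Matrix ι ι F} (hM : ∀ i j, M i j = ∑ t, A t i j • x t) (b : ι → F) (k : ℕ)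
    (v : ι → F) :
    seriesTerm M b (k + 1) v = ∑ t, x t * seriesTerm M b k (v ᵥ* A t) := by
  simp only [seriesTerm_apply, pow_succ', mul_apply, hM, vecMul, dotProduct, Finset.sum_mul,
    Finset.mul_sum, Finset.smul_sum, Finset.sum_smul, smul_mul_assoc, mul_smul_comm, smul_smul]
  simp only [mul_right_comm _ (b _)]
  simp_rw [Finset.sum_comm (t := (Finset.univ : Finset T))]
  refine Finset.sum_congr rfl fun t _ => ?_
  rw [Finset.sum_comm_cycle]
  exact Finset.sum_congr rfl fun l _ => Finset.sum_comm

def vanishingUpTo (M : Matrix ι ι R) (b : ι → F) (k : ℕ) : Submodule F (ι → F) :=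
  ⨅ j < k, LinearMap.ker (seriesTerm M b j)

theorem mem_vanishingUpTo {M : Matrix ι ι R} {b : ι → F} {k : ℕ} {v : ι → F} :
    v ∈ vanishingUpTo M b k ↔ ∀ j < k, seriesTerm M b j v = 0 := by
  simp [vanishingUpTo]

end SeriesTerm

section LinearEntries

variable {F X ι : Type*} [Field F] [Fintype X] [Fintype ι] [DecidableEq ι]
  {M : Matrix ι ι (FreeAlgebra F X)} {A : X → Matrix ι ι F}

theorem vanishingUpTo_succ (hM : ∀ i j, M i j = ∑ t, A t i j • FreeAlgebra.ι F t) (b : ι → F)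
    (k : ℕ) : vanishingUpTo M b (k + 1) =
      LinearMap.ker (seriesTerm M b 0) ⊓ ⨅ t, (vanishingUpTo M b k).comap (A t).vecMulLinear := by
  ext v
  simp only [Submodule.mem_inf, Submodule.mem_iInf, Submodule.mem_comap, LinearMap.mem_ker,
    mem_vanishingUpTo, vecMulLinear_apply, Nat.forall_lt_succ_left, seriesTerm_succ hM,
    FreeAlgebra.sum_ι_mul_eq_zero_iff]
  exact and_congr_right' ⟨fun h t j hj => h j hj t, fun h j hj t => h t j hj⟩

theorem vanishingUpTo_card_le (hM : ∀ i j, M i j = ∑ t, A t i j • FreeAlgebra.ι F t) (b : ι → F)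
    (m : ℕ) : vanishingUpTo M b (Fintype.card ι) ≤ vanishingUpTo M b m := by
  set f : Submodule F (ι → F) → Submodule F (ι → F) := fun N =>
    LinearMap.ker (seriesTerm M b 0) ⊓ ⨅ t, N.comap (A t).vecMulLinear
  have hf : Monotone f := fun _ _ h =>
    inf_le_inf_left _ (iInf_mono fun _ => Submodule.comap_mono h)
  have hiter : ∀ k, vanishingUpTo M b k = f^[k] ⊤ := by
    intro k
    induction k with
    | zero => ext v; simp [mem_vanishingUpTo]
    | succ k ih => rw [vanishingUpTo_succ hM, ih, Function.iterate_succ_apply']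
  rw [hiter, hiter, ← Module.finrank_fintype_fun_eq_card F]
  exact Submodule.iterate_finrank_top_le hf m

end LinearEntries

theorem schutzenberger_truncation_general {F : Type} [Field F] (n s : ℕ)
    (M : Matrix (Fin s) (Fin s) (FreeAlgebra F (Fin n)))
    (hM : ∀ i j, M i j ∈ Submodule.span F
      (Set.range (FreeAlgebra.ι F : Fin n → FreeAlgebra F (Fin n))))
    (c b : Fin s → F) :
    (∀ k : ℕ, ∑ i, ∑ j, (c i * b j) • (M ^ k) i j = 0) ↔
      (∀ k ≤ s - 1, ∑ i, ∑ j, (c i * b j) • (M ^ k) i j = 0) := by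
  choose A hA using fun i j => (Submodule.mem_span_range_iff_exists_fun F).1 (hM i j)
  refine ⟨fun h k _ => h k, fun h k => ?_⟩
  have hc : c ∈ vanishingUpTo M b (Fintype.card (Fin s)) :=
    mem_vanishingUpTo.2 fun j hj => h j (by rw [Fintype.card_fin] at hj; omega)
  exact mem_vanishingUpTo.1
    (vanishingUpTo_card_le (A := fun t => of fun i j => A i j t) (fun i j => (hA i j).symm) b
      (k + 1) hc) k k.lt_succ_self

/-- Schützenberger's truncation lemma: a recognizable series
`S = ∑_{k ≥ 0} c · Mᵏ · b` with linear representation of size `s`, where the entries of `M`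
are homogeneous linear forms in noncommuting variables `x₁,…,xₙ`, is the zero series
(i.e. every homogeneous component `c · Mᵏ · b` vanishes) if and only if
`c · Mᵏ · b = 0` for all `k ≤ s - 1`. -/
theorem schutzenberger_truncation {F : Type} [Field F] (n s : ℕ) (hs : 0 < s)
    (M : Matrix (Fin s) (Fin s) (FreeAlgebra F (Fin n)))
    (hM : ∀ i j, M i j ∈ Submodule.span F
      (Set.range (FreeAlgebra.ι F : Fin n → FreeAlgebra F (Fin n))))
    (c b : Fin s → F) :
    (∀ k : ℕ, ∑ i, ∑ j, (c i * b j) • (M ^ k) i j = 0) ↔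
      (∀ k ≤ s - 1, ∑ i, ∑ j, (c i * b j) • (M ^ k) i j = 0) :=
  schutzenberger_truncation_general n s M hM c b
end

section
/- Let w = a₀ x_{k₁} a₁ x_{k₂} ⋯ a_{d−1} x_{k_d} a_d be a generalized word of degree d with coefficients a_j ∈ M_ℓ(K). Substitute each variable x_k by the dℓ×dℓ block matrix Z̃_k which has blocks Z̃_{k,1},…,Z̃_{k,d} of size ℓ on the cyclic superdiagonal (position (l, l+1) for l < d and (d,1)), and embed each coefficient a via a ↦ I_d ⊗ a. Then the resulting product is block-diagonal with d diagonal blocks, the i-th block being a₀ Z̃_{k₁,π_i(1)} a₁ ⋯ a_{d−1} Z̃_{k_d,π_i(d)} a_d, where π_i is the cyclic permutation of [d] with π_i(1) = i. -/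
open Matrix

/-! Write `shiftBlocks s M` for the block matrix with block `M g` at block position `(g, g + s)`;
thus `Z̃_k` is a shift by `1` and `I_d ⊗ a` a shift by `0`. Such matrices multiply like a crossed
product: the shifts add, and the block of the right factor is read at the shifted index.
A word with `d` variables is therefore a shift by `d = 0` in `Fin d`, i.e. block-diagonal, and its
`g`-th block collects the blocks met along the cycle `g, g + 1, …, g + d - 1`. -/

/-- The `dℓ×dℓ` matrix with `ℓ×ℓ` blocks `Z l` on the cyclic superdiagonal
(block positions `(l, l+1)` for `l < d` and `(d, 1)`), zeros elsewhere.
(The block index is the second component, matching `Matrix.blockDiagonal`.) -/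
def cyclicBlocks {R : Type} [Semiring R] {ℓ d : ℕ} [NeZero d] (Z : Fin d → Matrix (Fin ℓ) (Fin ℓ) R) :
    Matrix (Fin ℓ × Fin d) (Fin ℓ × Fin d) R :=
  Matrix.of fun p q => if q.2 = p.2 + 1 then Z p.2 p.1 q.1 else 0

namespace Matrix

variable {R m G : Type*} [Semiring R] [DecidableEq G]

def shiftBlocks [Add G] (s : G) (M : G → Matrix m m R) : Matrix (m × G) (m × G) R :=
  of fun p q => if q.2 = p.2 + s then M p.2 p.1 q.1 else 0

theorem shiftBlocks_zero [AddZeroClass G] (M : G → Matrix m m R) :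
    shiftBlocks 0 M = blockDiagonal M := by
  ext ⟨x, i⟩ ⟨y, j⟩
  simp [shiftBlocks, blockDiagonal_apply, eq_comm]

section Mul

variable [Fintype m] [Fintype G]

theorem shiftBlocks_mul_shiftBlocks [AddSemigroup G] (s t : G) (M N : G → Matrix m m R) :
    shiftBlocks s M * shiftBlocks t N = shiftBlocks (s + t) fun g => M g * N (g + s) := by
  ext ⟨x, i⟩ ⟨y, j⟩
  simp only [shiftBlocks, mul_apply, of_apply, Fintype.sum_prod_type, ite_mul, zero_mul]
  rw [Finset.sum_comm, Finset.sum_eq_single (i + s) (fun b _ hb => by simp [hb]) (by simp)]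
  simp [← add_assoc]

theorem blockDiagonal_mul_shiftBlocks [AddMonoid G] (s : G) (M N : G → Matrix m m R) :
    blockDiagonal M * shiftBlocks s N = shiftBlocks s fun g => M g * N g := by
  rw [← shiftBlocks_zero, shiftBlocks_mul_shiftBlocks, zero_add]
  simp_rw [add_zero]

theorem shiftBlocks_mul_blockDiagonal [AddMonoid G] (s : G) (M N : G → Matrix m m R) :
    shiftBlocks s M * blockDiagonal N = shiftBlocks s fun g => M g * N (g + s) := by
  rw [← shiftBlocks_zero, shiftBlocks_mul_shiftBlocks, add_zero]

theorem prod_ofFn_shiftBlocks_one [DecidableEq m] [AddMonoidWithOne G] {k : ℕ}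
    (M : Fin k → G → Matrix m m R) :
    (List.ofFn fun j => shiftBlocks 1 (M j)).prod =
      shiftBlocks (k : G) fun g => (List.ofFn fun j : Fin k => M j (g + (j : ℕ))).prod := by
  induction k with
  | zero =>
    rw [List.ofFn_zero, List.prod_nil, Nat.cast_zero, shiftBlocks_zero]
    exact blockDiagonal_one.symm
  | succ k ih =>
    simp only [List.ofFn_succ', List.prod_concat, ih, shiftBlocks_mul_shiftBlocks,
      Nat.cast_succ, Fin.val_castSucc, Fin.val_last]

end Mul

end Matrix

theorem cyclicBlocks_eq_shiftBlocks_one {R : Type} [Semiring R] {ℓ d : ℕ} [NeZero d]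
    (Z : Fin d → Matrix (Fin ℓ) (Fin ℓ) R) : cyclicBlocks Z = shiftBlocks 1 Z :=
  rfl

/-- Indices are 0-based, so the paper's cyclic permutation `π_i` becomes `j ↦ i + j` in `Fin d`. -/
theorem generalizedWord_cyclicBlocks_eq_blockDiagonal {K : Type} [CommRing K] {ℓ d n : ℕ} [NeZero d]
    (a : Fin (d + 1) → Matrix (Fin ℓ) (Fin ℓ) K) (k : Fin d → Fin n)
    (Z : Fin n → Fin d → Matrix (Fin ℓ) (Fin ℓ) K) :
    Matrix.blockDiagonal (fun _ : Fin d => a 0) *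
        (List.ofFn fun j : Fin d =>
          cyclicBlocks (Z (k j)) * Matrix.blockDiagonal (fun _ : Fin d => a j.succ)).prod =
      Matrix.blockDiagonal fun i : Fin d =>
        a 0 * (List.ofFn fun j : Fin d => Z (k j) (i + j) * a j.succ).prod := by
  have hletter : ∀ j : Fin d,
      cyclicBlocks (Z (k j)) * blockDiagonal (fun _ : Fin d => a j.succ) =
        shiftBlocks 1 fun i => Z (k j) i * a j.succ :=
    fun j => by rw [cyclicBlocks_eq_shiftBlocks_one, shiftBlocks_mul_blockDiagonal]
  open Fin.NatCast in
  rw [funext hletter, prod_ofFn_shiftBlocks_one, blockDiagonal_mul_shiftBlocks, Fin.natCast_self,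
    shiftBlocks_zero]
  simp only [Fin.cast_val_eq_self]
end
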